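/- There exists a 2×2-block sequence of matrices demonstrating that the condition limsup_{n→∞} (1/n) log Θ(0,n) > 0 does not imply forward center bunching: with A = diag(e^{−2}, e^{−1}), B = diag(e^{−1/2}, e^{−1}), C = diag(1, e^{3/4}), if the stable blocks along the orbit are A, B, A, A, B, B, A (4×), B (4×), A (8×), B (8×), … and the center block is constantly C, then ‖product of first n stable blocks‖ = e^{−n}, the center product has conorm 1 and norm e^{(3/4)n} (so limsup (1/n)log Θ(0,n) = 1/4 > 0), yet for j = 2^{m+1} + 2^m − 2 and n = 2^m the stable product from time j over n steps is B^n, giving Θ(j, n) = e^{−n/4}, so liminf over such blocks is negative. -/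

import Mathlib

open Filter

/-- Operator norm (on Euclidean space) of a square real matrix. -/
noncomputable def matOpNorm2 (M : Matrix (Fin 2) (Fin 2) ℝ) : ℝ :=
  ‖LinearMap.toContinuousLinearMap (Matrix.toEuclideanLin M)‖

noncomputable def Amat : Matrix (Fin 2) (Fin 2) ℝ :=
  Matrix.diagonal ![Real.exp (-2), Real.exp (-1)]

noncomputable def Bmat : Matrix (Fin 2) (Fin 2) ℝ :=
  Matrix.diagonal ![Real.exp (-(1/2 : ℝ)), Real.exp (-1)]

noncomputable def Cmat : Matrix (Fin 2) (Fin 2) ℝ :=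
  Matrix.diagonal ![1, Real.exp (3/4 : ℝ)]

/-- The stable sequence: consecutive blocks `A` (`2^m` times) then `B` (`2^m` times), for
`m = 0, 1, 2, …`; that is, `A, B, A, A, B, B, A (4×), B (4×), A (8×), B (8×), …`. -/
noncomputable def stblSeq (n : ℕ) : Matrix (Fin 2) (Fin 2) ℝ :=
  if n + 2 - 2 ^ (Nat.log2 (n + 2) - 1 + 1) < 2 ^ (Nat.log2 (n + 2) - 1) then Amat else Bmat

/-- The products `S(j,n) = S_{j+n−1} ⋯ S_j`. -/
noncomputable def matSeqProd (S : ℕ → Matrix (Fin 2) (Fin 2) ℝ) (j : ℕ) :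
    ℕ → Matrix (Fin 2) (Fin 2) ℝ
  | 0 => 1
  | n + 1 => S (j + n) * matSeqProd S j n

/-- `Θ(j,n) = ‖S(j,n)‖⁻¹ · 𝐦(Cⁿ) · ‖Cⁿ‖⁻¹`, with conorm `𝐦(M) = ‖M⁻¹‖⁻¹`. -/
noncomputable def thetaEx (j n : ℕ) : ℝ :=
  (matOpNorm2 (matSeqProd stblSeq j n))⁻¹ * (matOpNorm2 ((Cmat ^ n)⁻¹))⁻¹ *
    (matOpNorm2 (Cmat ^ n))⁻¹

/-!
All matrices involved are diagonal with positive entries, so every norm is the exponential of the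
larger logarithmic entry, and the center contributes `𝐦(Cⁿ) ‖Cⁿ‖⁻¹ = e^{-3n/4}`. The second entry
of `S(0,n)` is `e^{-n}`, its first is `e^{-2a-b/2}` where `a` and `b` count the `A`s and `B`s among
the first `n` blocks. Subtracting `2^m` maps the `B`-half of round `m` injectively into its
`A`-half, so `b ≤ a` and the second entry dominates: `‖S(0,n)‖ = e^{-n}`. On the `B`-half of
round `m` the product is `B^{2^m}`, whose norm is `e^{-2^{m-1}}`.
-/

open Matrix Real Finset
open scoped Matrix.Norms.L2Operator

theorem matOpNorm2_diagonal (a b : ℝ) : matOpNorm2 (diagonal ![a, b]) = max |a| |b| := by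
  change ‖(diagonal ![a, b] : Matrix (Fin 2) (Fin 2) ℝ)‖ = _
  rw [l2_opNorm_diagonal, Pi.norm_def, Fin.univ_succ]
  simp

theorem matOpNorm2_diagonal_exp (a b : ℝ) :
    matOpNorm2 (diagonal ![exp a, exp b]) = exp (max a b) := by
  rw [matOpNorm2_diagonal, abs_of_pos (exp_pos a), abs_of_pos (exp_pos b),
    exp_monotone.map_max]

theorem diagonal_exp_mul (a b c d : ℝ) :
    diagonal ![exp a, exp b] * diagonal ![exp c, exp d] =
      diagonal ![exp (a + c), exp (b + d)] := by
  rw [diagonal_mul_diagonal, exp_add, exp_add]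
  congr 1
  ext i
  fin_cases i <;> rfl

theorem diagonal_exp_pow (a b : ℝ) (n : ℕ) :
    diagonal ![exp a, exp b] ^ n = diagonal ![exp (n * a), exp (n * b)] := by
  induction n with
  | zero => simp [← diagonal_one]
  | succ n ih =>
    rw [pow_succ, ih, diagonal_exp_mul]
    push_cast
    ring_nf

theorem inv_diagonal_exp (a b : ℝ) :
    (diagonal ![exp a, exp b])⁻¹ = diagonal ![exp (-a), exp (-b)] := by
  refine inv_eq_right_inv ?_
  rw [diagonal_exp_mul, add_neg_cancel, add_neg_cancel, exp_zero, ← diagonal_one]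
  congr 1
  ext i
  fin_cases i <;> rfl

theorem Cmat_pow (n : ℕ) : Cmat ^ n = diagonal ![exp 0, exp (3 / 4 * n)] := by
  rw [Cmat, ← exp_zero, diagonal_exp_pow, mul_zero, mul_comm]

theorem matOpNorm2_Cmat_pow (n : ℕ) : matOpNorm2 (Cmat ^ n) = exp (3 / 4 * n) := by
  rw [Cmat_pow, matOpNorm2_diagonal_exp, max_eq_right (by positivity)]

theorem matOpNorm2_inv_Cmat_pow (n : ℕ) : matOpNorm2 ((Cmat ^ n)⁻¹) = 1 := by
  rw [Cmat_pow, inv_diagonal_exp, matOpNorm2_diagonal_exp, neg_zero,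
    max_eq_left (by simp only [Left.neg_nonpos_iff]; positivity), exp_zero]

theorem thetaEx_eq (j n : ℕ) :
    thetaEx j n = (matOpNorm2 (matSeqProd stblSeq j n))⁻¹ * exp (-(3 / 4 * n)) := by
  rw [thetaEx, matOpNorm2_inv_Cmat_pow, matOpNorm2_Cmat_pow, inv_one, mul_one, Real.exp_neg]

theorem matSeqProd_const {S : ℕ → Matrix (Fin 2) (Fin 2) ℝ} {M : Matrix (Fin 2) (Fin 2) ℝ}
    {j n : ℕ} (h : ∀ i, j ≤ i → i < j + n → S i = M) : matSeqProd S j n = M ^ n := by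
  induction n with
  | zero => rfl
  | succ n ih =>
    rw [matSeqProd, ih fun i hj hi => h i hj (by omega), h (j + n) (by omega) (by omega),
      pow_succ']

/-- Position `i` of the stable sequence lies in round `m = stblRound i`, the positions with
`2^(m+1) ≤ i + 2 < 2^(m+2)`; the first half of the round carries `A`, the second half `B`. -/
def stblRound (i : ℕ) : ℕ := Nat.log2 (i + 2) - 1

theorem stblRound_eq_iff {i m : ℕ} :
    stblRound i = m ↔ 2 ^ (m + 1) ≤ i + 2 ∧ i + 2 < 2 ^ (m + 2) := by
  have hpos : 1 ≤ Nat.log2 (i + 2) := by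
    rw [Nat.log2_eq_log_two]; exact Nat.log_pos (by norm_num) (by omega)
  rw [← Nat.log_eq_iff (by simp), ← Nat.log2_eq_log_two, stblRound]
  omega

theorem stblRound_spec (i : ℕ) :
    2 ^ (stblRound i + 1) ≤ i + 2 ∧ i + 2 < 2 ^ (stblRound i + 2) :=
  stblRound_eq_iff.1 rfl

def IsAIndex (i : ℕ) : Prop := i + 2 < 2 ^ (stblRound i + 1) + 2 ^ stblRound i

instance : DecidablePred IsAIndex := fun _ => Nat.decLt _ _

theorem stblSeq_eq (i : ℕ) : stblSeq i = if IsAIndex i then Amat else Bmat := by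
  have := (stblRound_spec i).1
  change (if i + 2 - 2 ^ (stblRound i + 1) < 2 ^ stblRound i then Amat else Bmat) = _
  refine if_congr ?_ rfl rfl
  rw [IsAIndex]
  omega

theorem two_pow_stblRound_add_le_of_not_isAIndex {i : ℕ} (hi : ¬ IsAIndex i) :
    2 ^ (stblRound i + 1) + 2 ^ stblRound i ≤ i + 2 :=
  not_lt.1 hi

theorem sub_two_pow_stblRound_of_not_isAIndex {i : ℕ} (hi : ¬ IsAIndex i) :
    stblRound (i - 2 ^ stblRound i) = stblRound i ∧ IsAIndex (i - 2 ^ stblRound i) := by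
  have hB := two_pow_stblRound_add_le_of_not_isAIndex hi
  obtain ⟨-, h₂⟩ := stblRound_spec i
  set m := stblRound i
  have e₁ : 2 ^ (m + 1) = 2 * 2 ^ m := by ring
  have e₂ : 2 ^ (m + 2) = 4 * 2 ^ m := by ring
  have hround : stblRound (i - 2 ^ m) = m := stblRound_eq_iff.2 (by omega)
  refine ⟨hround, ?_⟩
  rw [IsAIndex, hround]
  omega

theorem card_filter_not_isAIndex_le (n : ℕ) :
    #{i ∈ range n | ¬ IsAIndex i} ≤ #{i ∈ range n | IsAIndex i} := by
  refine card_le_card_of_injOn (fun i => i - 2 ^ stblRound i) ?_ ?_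
  · intro i hi
    simp only [mem_coe, mem_filter, mem_range] at hi ⊢
    exact ⟨(Nat.sub_le _ _).trans_lt hi.1, (sub_two_pow_stblRound_of_not_isAIndex hi.2).2⟩
  · intro i₁ hi₁ i₂ hi₂ heq
    simp only [mem_coe, mem_filter] at hi₁ hi₂
    simp only at heq
    obtain ⟨hround₁, -⟩ := sub_two_pow_stblRound_of_not_isAIndex hi₁.2
    obtain ⟨hround₂, -⟩ := sub_two_pow_stblRound_of_not_isAIndex hi₂.2
    have hround : stblRound i₁ = stblRound i₂ := by rw [← hround₁, ← hround₂, heq]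
    have h₁ := two_pow_stblRound_add_le_of_not_isAIndex hi₁.2
    have h₂ := two_pow_stblRound_add_le_of_not_isAIndex hi₂.2
    simp only [hround] at heq h₁
    omega

def countA (n : ℕ) : ℕ := #{i ∈ range n | IsAIndex i}

theorem countA_succ (n : ℕ) : countA (n + 1) = if IsAIndex n then countA n + 1 else countA n := by
  rw [countA, countA, range_add_one, filter_insert]
  split_ifs
  · exact card_insert_of_notMem (by simp)
  · rfl

theorem le_three_mul_countA (n : ℕ) : n ≤ 3 * countA n := by
  have hsplit := card_filter_add_card_filter_not (s := range n) (IsAIndex ·)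
  rw [card_range] at hsplit
  have := card_filter_not_isAIndex_le n
  rw [countA]
  omega

theorem matSeqProd_stblSeq_zero (n : ℕ) :
    matSeqProd stblSeq 0 n = diagonal ![exp (-(3 / 2) * countA n - n / 2), exp (-n)] := by
  induction n with
  | zero => simp [matSeqProd, countA, ← diagonal_one]
  | succ n ih =>
    rw [matSeqProd, zero_add, ih, stblSeq_eq, countA_succ]
    split_ifs <;> simp only [Amat, Bmat, diagonal_exp_mul] <;> push_cast <;> ring_nf

theorem matOpNorm2_matSeqProd_stblSeq_zero (n : ℕ) :
    matOpNorm2 (matSeqProd stblSeq 0 n) = exp (-n) := by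
  have : (n : ℝ) ≤ 3 * countA n := by exact_mod_cast le_three_mul_countA n
  rw [matSeqProd_stblSeq_zero, matOpNorm2_diagonal_exp, max_eq_right (by linarith)]

theorem stblSeq_eq_Bmat {i m : ℕ} (h₁ : 2 ^ (m + 1) + 2 ^ m ≤ i + 2) (h₂ : i + 2 < 2 ^ (m + 2)) :
    stblSeq i = Bmat := by
  have hround : stblRound i = m := stblRound_eq_iff.2 ⟨by omega, h₂⟩
  rw [stblSeq_eq, if_neg (by rw [IsAIndex, hround]; omega)]

theorem matSeqProd_stblSeq_Bblock (m : ℕ) :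
    matSeqProd stblSeq (2 ^ (m + 1) + 2 ^ m - 2) (2 ^ m) = Bmat ^ 2 ^ m := by
  have e₁ : 2 ^ (m + 1) = 2 * 2 ^ m := by ring
  have e₂ : 2 ^ (m + 2) = 4 * 2 ^ m := by ring
  have := Nat.one_le_two_pow (n := m)
  exact matSeqProd_const fun i h₁ h₂ => stblSeq_eq_Bmat (m := m) (by omega) (by omega)

theorem thetaEx_zero (n : ℕ) : thetaEx 0 n = exp (1 / 4 * n) := by
  rw [thetaEx_eq, matOpNorm2_matSeqProd_stblSeq_zero, ← Real.exp_neg, ← exp_add]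
  ring_nf

theorem thetaEx_Bblock (m : ℕ) :
    thetaEx (2 ^ (m + 1) + 2 ^ m - 2) (2 ^ m) = exp (-(1 / 4) * 2 ^ m) := by
  rw [thetaEx_eq, matSeqProd_stblSeq_Bblock, Bmat, diagonal_exp_pow, matOpNorm2_diagonal_exp,
    max_eq_left (mul_le_mul_of_nonneg_left (by norm_num) (by positivity)), ← Real.exp_neg,
    ← exp_add]
  push_cast
  ring_nf

/-- The example showing that `limsup (1/n) log Θ(0,n) > 0` does not imply forward center
bunching: `‖S(0,n)‖ = e^{−n}`, `𝐦(Cⁿ) = 1` and `‖Cⁿ‖ = e^{3n/4}` (so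
`Θ(0,n) = e^{n/4}` and the `limsup` is `1/4 > 0`), yet for `j = 2^{m+1} + 2^m − 2` and
`n = 2^m` the stable product is `Bⁿ` and `Θ(j,n) = e^{−n/4}`, so the `liminf` over these
blocks is negative. -/
theorem not_forward_center_bunched_example :
    (∀ n : ℕ, matOpNorm2 (matSeqProd stblSeq 0 n) = Real.exp (-(n : ℝ))) ∧
    (∀ n : ℕ, (matOpNorm2 ((Cmat ^ n)⁻¹))⁻¹ = 1 ∧
      matOpNorm2 (Cmat ^ n) = Real.exp ((3/4 : ℝ) * n)) ∧
    (∀ n : ℕ, thetaEx 0 n = Real.exp ((1/4 : ℝ) * n)) ∧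
    (∀ m : ℕ, matSeqProd stblSeq (2 ^ (m + 1) + 2 ^ m - 2) (2 ^ m) = Bmat ^ (2 ^ m) ∧
      thetaEx (2 ^ (m + 1) + 2 ^ m - 2) (2 ^ m) = Real.exp (-(1/4 : ℝ) * 2 ^ m)) ∧
    (∀ m : ℕ, (1 / (2 ^ m : ℝ)) *
        Real.log (thetaEx (2 ^ (m + 1) + 2 ^ m - 2) (2 ^ m)) = -(1/4 : ℝ)) := by
  refine ⟨matOpNorm2_matSeqProd_stblSeq_zero,
    fun n => ⟨by rw [matOpNorm2_inv_Cmat_pow, inv_one], matOpNorm2_Cmat_pow n⟩, thetaEx_zero,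
    fun m => ⟨matSeqProd_stblSeq_Bblock m, thetaEx_Bblock m⟩, fun m => ?_⟩
  rw [thetaEx_Bblock, log_exp]
  field_simp
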